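/- Let σ* = (x*, y*) be a Nash equilibrium of the game given by U, let μ > 0, let σ^r ∈ Δ^n × Δ^m be a reference profile, and let σ̂ = (x̂, ŷ) be a saddle point of the corresponding SCCP. Then ‖σ* − σ̂‖₂ ≤ ‖σ* − σ^r‖₂, where profiles are identified with vectors in ℝ^{n+m}. -/

import Mathlib

open Finset

/-- Squared Euclidean norm of a vector. -/
noncomputable def sqnorm {k : ℕ} (v : Fin k → ℝ) : ℝ := ∑ i, (v i) ^ 2

/-- Euclidean norm of a concatenated profile vector in ℝ^(k+l). -/
noncomputable def pnorm {k l : ℕ} (v : Fin k → ℝ) (w : Fin l → ℝ) : ℝ :=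
  Real.sqrt (sqnorm v + sqnorm w)

/-- Bilinear payoff xᵀUy. -/
def payoff {k l : ℕ} (U : Matrix (Fin k) (Fin l) ℝ) (x : Fin k → ℝ) (y : Fin l → ℝ) : ℝ :=
  ∑ i, ∑ j, x i * U i j * y j

/-- Regularized SCCP objective G(x,y) = -xᵀUy + μ/2 ‖x - xʳ‖² - μ/2 ‖y - yʳ‖². -/
noncomputable def sccpObj {k l : ℕ} (U : Matrix (Fin k) (Fin l) ℝ) (μ : ℝ)
    (xr : Fin k → ℝ) (yr : Fin l → ℝ) (x : Fin k → ℝ) (y : Fin l → ℝ) : ℝ :=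
  -(payoff U x y) + μ / 2 * sqnorm (x - xr) - μ / 2 * sqnorm (y - yr)

/-- (x̂, ŷ) is a saddle point of the SCCP with weight μ and reference (xr, yr). -/
def IsSaddle {k l : ℕ} (U : Matrix (Fin k) (Fin l) ℝ) (μ : ℝ)
    (xr : Fin k → ℝ) (yr : Fin l → ℝ) (xh : Fin k → ℝ) (yh : Fin l → ℝ) : Prop :=
  xh ∈ stdSimplex ℝ (Fin k) ∧ yh ∈ stdSimplex ℝ (Fin l) ∧
  (∀ y ∈ stdSimplex ℝ (Fin l), sccpObj U μ xr yr xh y ≤ sccpObj U μ xr yr xh yh) ∧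
  (∀ x ∈ stdSimplex ℝ (Fin k), sccpObj U μ xr yr xh yh ≤ sccpObj U μ xr yr x yh)

/-- (x*, y*) is a Nash equilibrium of the zero-sum game with payoff matrix U. -/
def IsNash {k l : ℕ} (U : Matrix (Fin k) (Fin l) ℝ)
    (xs : Fin k → ℝ) (ys : Fin l → ℝ) : Prop :=
  xs ∈ stdSimplex ℝ (Fin k) ∧ ys ∈ stdSimplex ℝ (Fin l) ∧
  (∀ x ∈ stdSimplex ℝ (Fin k), payoff U x ys ≤ payoff U xs ys) ∧
  (∀ y ∈ stdSimplex ℝ (Fin l), payoff U xs ys ≤ payoff U xs y)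

/-- Exploitability ε(σ) = max_{x'} x'ᵀUy - min_{y'} xᵀUy'. -/
noncomputable def exploit {k l : ℕ} (U : Matrix (Fin k) (Fin l) ℝ)
    (x : Fin k → ℝ) (y : Fin l → ℝ) : ℝ :=
  sSup ((fun x' => payoff U x' y) '' stdSimplex ℝ (Fin k)) -
  sInf ((fun y' => payoff U x y') '' stdSimplex ℝ (Fin l))

/-- Transformed loss for the x-player: ℓ_x = -Uy + μ(x - xʳ). -/
noncomputable def lossX {k l : ℕ} (U : Matrix (Fin k) (Fin l) ℝ) (μ : ℝ)
    (xr : Fin k → ℝ) (x : Fin k → ℝ) (y : Fin l → ℝ) : Fin k → ℝ :=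
  fun i => -(∑ j, U i j * y j) + μ * (x i - xr i)

/-- Transformed loss for the y-player: ℓ_y = Uᵀx + μ(y - yʳ). -/
noncomputable def lossY {k l : ℕ} (U : Matrix (Fin k) (Fin l) ℝ) (μ : ℝ)
    (yr : Fin l → ℝ) (x : Fin k → ℝ) (y : Fin l → ℝ) : Fin l → ℝ :=
  fun j => (∑ i, U i j * x i) + μ * (y j - yr j)

/-- Immediate regret r = ⟨ℓ, p⟩·𝟏 - ℓ. -/
noncomputable def imRegret {k : ℕ} (ℓ : Fin k → ℝ) (p : Fin k → ℝ) : Fin k → ℝ :=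
  fun i => (∑ i', ℓ i' * p i') - ℓ i


/-! The saddle point is the proximal point of the game at σʳ. The first-order optimality
conditions of the two regularized players at (x̂, ŷ), tested against σ* and added to the Nash
inequalities at σ*, give ⟨σ̂ - σʳ, σ* - σ̂⟩ ≥ 0. Expanding
‖σ* - σʳ‖² = ‖σ* - σ̂‖² + 2⟨σ̂ - σʳ, σ* - σ̂⟩ + ‖σ̂ - σʳ‖² then gives the claim. -/

open Matrix

lemma nonneg_of_forall_mul_add_mul_sq_nonneg {a b : ℝ}
    (h : ∀ t : ℝ, 0 < t → t ≤ 1 → 0 ≤ a * t + b * t ^ 2) : 0 ≤ a := by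
  by_contra! ha
  set t : ℝ := min 1 (-a / (2 * |b| + 1))
  have hden : 0 < 2 * |b| + 1 := by positivity
  have ht0 : 0 < t := lt_min one_pos (div_pos (neg_pos.mpr ha) hden)
  have hta : t * (2 * |b| + 1) ≤ -a := (le_div_iff₀ hden).mp (min_le_right _ _)
  have hlin : 0 ≤ a + b * t :=
    nonneg_of_mul_nonneg_right (by linarith [h t ht0 (min_le_left _ _)]) ht0
  nlinarith [mul_le_mul_of_nonneg_right (le_abs_self b) ht0.le]

lemma sqnorm_eq_dotProduct {k : ℕ} (v : Fin k → ℝ) : sqnorm v = v ⬝ᵥ v := by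
  simp only [sqnorm, dotProduct, sq]

lemma sqnorm_nonneg {k : ℕ} (v : Fin k → ℝ) : 0 ≤ sqnorm v :=
  sum_nonneg fun i _ => sq_nonneg (v i)

lemma payoff_eq_dotProduct_mulVec {k l : ℕ} (U : Matrix (Fin k) (Fin l) ℝ)
    (x : Fin k → ℝ) (y : Fin l → ℝ) : payoff U x y = x ⬝ᵥ (U *ᵥ y) := by
  simp only [payoff, dotProduct, mulVec, mul_sum, mul_assoc]

lemma IsMinOn.dotProduct_le_of_add_sqnorm {k : ℕ} {s : Set (Fin k → ℝ)} {c r p q : Fin k → ℝ}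
    {μ : ℝ} (hmin : IsMinOn (fun z => c ⬝ᵥ z + μ / 2 * sqnorm (z - r)) s p) (hs : Convex ℝ s)
    (hp : p ∈ s) (hq : q ∈ s) :
    c ⬝ᵥ p ≤ c ⬝ᵥ q + μ * ((p - r) ⬝ᵥ (q - p)) := by
  suffices 0 ≤ c ⬝ᵥ (q - p) + μ * ((p - r) ⬝ᵥ (q - p)) by
    rw [dotProduct_sub] at this; linarith
  apply nonneg_of_forall_mul_add_mul_sq_nonneg (b := μ / 2 * sqnorm (q - p))
  intro t ht0 ht1
  have hz := isMinOn_iff.mp hmin _ (hs.add_smul_sub_mem hp hq ⟨ht0.le, ht1⟩)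
  have hzr : p + t • (q - p) - r = (p - r) + t • (q - p) := by abel
  rw [hzr] at hz
  simp only [sqnorm_eq_dotProduct, dotProduct_add, add_dotProduct, dotProduct_smul,
    smul_dotProduct, smul_eq_mul, dotProduct_comm (q - p) (p - r)] at hz ⊢
  nlinarith

lemma pnorm_sub_le_pnorm_sub {k l : ℕ} {p q r : Fin k → ℝ} {p' q' r' : Fin l → ℝ}
    (h : 0 ≤ (p - r) ⬝ᵥ (q - p) + (p' - r') ⬝ᵥ (q' - p')) :
    pnorm (q - p) (q' - p') ≤ pnorm (q - r) (q' - r') := by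
  have hq : q - r = (q - p) + (p - r) := by abel
  have hq' : q' - r' = (q' - p') + (p' - r') := by abel
  have hpr := sqnorm_nonneg (p - r)
  have hpr' := sqnorm_nonneg (p' - r')
  apply Real.sqrt_le_sqrt
  rw [hq, hq']
  simp only [sqnorm_eq_dotProduct, dotProduct_add, add_dotProduct,
    dotProduct_comm (q - p) (p - r), dotProduct_comm (q' - p') (p' - r')] at h hpr hpr' ⊢
  linarith

section Saddle

variable {k l : ℕ} {U : Matrix (Fin k) (Fin l) ℝ} {μ : ℝ} {xr xh : Fin k → ℝ} {yr yh : Fin l → ℝ}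

lemma IsSaddle.isMinOn_left (hsad : IsSaddle U μ xr yr xh yh) :
    IsMinOn (fun x => -(U *ᵥ yh) ⬝ᵥ x + μ / 2 * sqnorm (x - xr)) (stdSimplex ℝ (Fin k)) xh :=
  isMinOn_iff.mpr fun x hx => by
    have := hsad.2.2.2 x hx
    simp only [sccpObj, payoff_eq_dotProduct_mulVec, neg_dotProduct,
      dotProduct_comm (U *ᵥ yh)] at this ⊢
    linarith

lemma IsSaddle.isMinOn_right (hsad : IsSaddle U μ xr yr xh yh) :
    IsMinOn (fun y => (xh ᵥ* U) ⬝ᵥ y + μ / 2 * sqnorm (y - yr)) (stdSimplex ℝ (Fin l)) yh :=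
  isMinOn_iff.mpr fun y hy => by
    have := hsad.2.2.1 y hy
    simp only [sccpObj, payoff_eq_dotProduct_mulVec, ← dotProduct_mulVec] at this ⊢
    linarith

lemma IsSaddle.dotProduct_nonneg_of_isNash {xs : Fin k → ℝ} {ys : Fin l → ℝ}
    (hsad : IsSaddle U μ xr yr xh yh) (hμ : 0 < μ) (hNE : IsNash U xs ys) :
    0 ≤ (xh - xr) ⬝ᵥ (xs - xh) + (yh - yr) ⬝ᵥ (ys - yh) := by
  obtain ⟨hxs, hys, hNx, hNy⟩ := hNE
  have hx := hsad.isMinOn_left.dotProduct_le_of_add_sqnorm (convex_stdSimplex ℝ _) hsad.1 hxs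
  have hy := hsad.isMinOn_right.dotProduct_le_of_add_sqnorm (convex_stdSimplex ℝ _) hsad.2.1 hys
  have hN : payoff U xh ys ≤ payoff U xs yh := (hNx xh hsad.1).trans (hNy yh hsad.2.1)
  simp only [neg_dotProduct, dotProduct_comm (U *ᵥ yh), ← dotProduct_mulVec,
    ← payoff_eq_dotProduct_mulVec] at hx hy
  exact nonneg_of_mul_nonneg_right (by linarith) hμ

end Saddle

theorem saddle_closer_than_reference_general
    {n m : ℕ}
    (U : Matrix (Fin n) (Fin m) ℝ) (μ : ℝ) (hμ : 0 < μ)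
    (xs : Fin n → ℝ) (ys : Fin m → ℝ) (hNE : IsNash U xs ys)
    (xr : Fin n → ℝ) (yr : Fin m → ℝ)
    (xh : Fin n → ℝ) (yh : Fin m → ℝ)
    (hsad : IsSaddle U μ xr yr xh yh) :
    pnorm (xs - xh) (ys - yh) ≤ pnorm (xs - xr) (ys - yr) :=
  pnorm_sub_le_pnorm_sub (hsad.dotProduct_nonneg_of_isNash hμ hNE)

/-- The SCCP saddle point is at least as close to the NE as the reference strategy. -/
theorem saddle_closer_than_reference
    {n m : ℕ} (hn : 0 < n) (hm : 0 < m)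
    (U : Matrix (Fin n) (Fin m) ℝ) (μ : ℝ) (hμ : 0 < μ)
    (xs : Fin n → ℝ) (ys : Fin m → ℝ) (hNE : IsNash U xs ys)
    (xr : Fin n → ℝ) (yr : Fin m → ℝ)
    (hxr : xr ∈ stdSimplex ℝ (Fin n)) (hyr : yr ∈ stdSimplex ℝ (Fin m))
    (xh : Fin n → ℝ) (yh : Fin m → ℝ)
    (hsad : IsSaddle U μ xr yr xh yh) :
    pnorm (xs - xh) (ys - yh) ≤ pnorm (xs - xr) (ys - yr) :=
  saddle_closer_than_reference_general U μ hμ xs ys hNE xr yr xh yh hsad
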